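/- Let S be a compact subset of ℝ and let μ, ν be Borel probability measures on S, regarded as probability measures on ℝ, with cumulative distribution functions F_μ(x) = μ((−∞, x]) and F_ν(x) = ν((−∞, x]). Then the Monge–Kantorovich distance between μ and ν equals the L¹ distance of their cumulative distribution functions: d_MK(μ, ν) = ∫_ℝ |F_μ(x) − F_ν(x)| dx. -/

import Mathlib

/-!
Every test function on `[a, b] ⊇ S` that is a primitive `φ x = ∫ t in a..x, g t` of a bounded `g`
satisfies, by Fubini, `∫ φ dμ - ∫ φ dν = ∫ g (F_ν - F_μ)`. A `1`-Lipschitz function is such a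
primitive (up to a constant) with `|g| ≤ 1`, which bounds the difference by `∫ |F_μ - F_ν|`; the
bound is attained by the primitive of `g = ±1` with the sign of `F_ν - F_μ`. Lipschitz functions
on `S` extend to `ℝ` with the same constant, so the supremum may be taken over functions on `ℝ`.
-/

open MeasureTheory

/-- The Monge–Kantorovich distance between two Borel (probability) measures on a metric
space `S`: the supremum of `∫ f dμ - ∫ f dν` over all `1`-Lipschitz functions `f : S → ℝ`. -/
noncomputable def dMK {S : Type*} [MetricSpace S] [MeasurableSpace S]
    (μ ν : Measure S) : ℝ :=
  sSup {r : ℝ | ∃ f : S → ℝ, LipschitzWith 1 f ∧ r = ∫ x, f x ∂μ - ∫ x, f x ∂ν}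

open ProbabilityTheory Set
open scoped NNReal

lemma LipschitzWith.exists_lipschitzWith_comp_val_eq {α : Type*} [PseudoMetricSpace α]
    {s : Set α} {K : ℝ≥0} {f : s → ℝ} (hf : LipschitzWith K f) :
    ∃ F : α → ℝ, LipschitzWith K F ∧ F ∘ (↑) = f := by
  have hext : ∀ x : s, Function.extend Subtype.val f 0 x = f x :=
    Subtype.val_injective.extend_apply f 0
  obtain ⟨F, hF, hEq⟩ := (lipschitzOnWith_iff_restrict (f := Function.extend Subtype.val f 0)).2
    (by convert hf using 1; exact funext hext) |>.extend_real
  exact ⟨F, hF, funext fun x => (hEq x.2).symm.trans (hext x)⟩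

lemma intervalIntegrable_of_abs_le {g : ℝ → ℝ} (hg : Measurable g) {C : ℝ}
    (hgC : ∀ t, |g t| ≤ C) (u v : ℝ) : IntervalIntegrable g volume u v :=
  (intervalIntegrable_const (c := C)).mono_fun hg.aestronglyMeasurable
    (ae_of_all _ fun t => (hgC t).trans (le_abs_self C))

lemma lipschitzWith_intervalIntegral {g : ℝ → ℝ} (hg : Measurable g) {K : ℝ≥0}
    (hgK : ∀ t, |g t| ≤ K) (a : ℝ) : LipschitzWith K (fun x => ∫ t in a..x, g t) := by
  have hint := intervalIntegrable_of_abs_le hg hgK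
  refine LipschitzWith.of_dist_le_mul fun x y => ?_
  rw [Real.dist_eq, intervalIntegral.integral_interval_sub_left (hint a x) (hint a y),
    Real.dist_eq, ← Real.norm_eq_abs]
  exact intervalIntegral.norm_integral_le_of_norm_le_const fun t _ => hgK t

section ConcentratedOnIcc

variable {a b : ℝ} {μ ν : Measure ℝ}

lemma ContinuousOn.integrable_of_ae_mem_Icc [IsFiniteMeasure μ] {f : ℝ → ℝ}
    (hf : ContinuousOn f (Icc a b)) (hμ : ∀ᵐ x ∂μ, x ∈ Icc a b) : Integrable f μ := by
  rw [← Measure.restrict_eq_self_of_ae_mem hμ]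
  exact hf.integrableOn_compact isCompact_Icc

variable [IsProbabilityMeasure μ] [IsProbabilityMeasure ν]

lemma cdf_eq_zero_of_lt (hμ : ∀ᵐ x ∂μ, x ∈ Icc a b) {t : ℝ} (ht : t < a) : cdf μ t = 0 := by
  rw [cdf_eq_real, measureReal_eq_zero_iff, measure_eq_zero_iff_ae_notMem]
  exact hμ.mono fun x hx hxt => (ht.trans_le hx.1).not_ge hxt

lemma cdf_eq_one_of_le (hμ : ∀ᵐ x ∂μ, x ∈ Icc a b) {t : ℝ} (ht : b ≤ t) : cdf μ t = 1 := by
  rw [cdf_eq_real, eq_comm, ← sub_eq_zero, ← probReal_compl_eq_one_sub measurableSet_Iic,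
    measureReal_eq_zero_iff, measure_eq_zero_iff_ae_notMem]
  exact hμ.mono fun x hx hxt => hxt (hx.2.trans ht)

lemma cdf_eq_cdf_of_notMem_Icc (hμ : ∀ᵐ x ∂μ, x ∈ Icc a b) (hν : ∀ᵐ x ∂ν, x ∈ Icc a b)
    {t : ℝ} (ht : t ∉ Icc a b) : cdf μ t = cdf ν t := by
  rcases lt_or_ge t a with hta | hat
  · rw [cdf_eq_zero_of_lt hμ hta, cdf_eq_zero_of_lt hν hta]
  · have hbt : b ≤ t := (not_le.1 fun htb => ht ⟨hat, htb⟩).le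
    rw [cdf_eq_one_of_le hμ hbt, cdf_eq_one_of_le hν hbt]

lemma integrable_abs_cdf_sub_cdf (hμ : ∀ᵐ x ∂μ, x ∈ Icc a b) (hν : ∀ᵐ x ∂ν, x ∈ Icc a b) :
    Integrable (fun t => |cdf μ t - cdf ν t|) := by
  refine IntegrableOn.integrable_of_forall_notMem_eq_zero (s := Icc a b) ?_ fun t ht => by
    rw [cdf_eq_cdf_of_notMem_Icc hμ hν ht, sub_self, abs_zero]
  refine IntegrableOn.of_bound measure_Icc_lt_top ?_ 1 (ae_of_all _ fun t => ?_)
  · exact ((monotone_cdf μ).measurable.sub (monotone_cdf ν).measurable).abs.aestronglyMeasurable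
  · rw [Real.norm_eq_abs, abs_abs]
    exact abs_sub_le_of_nonneg_of_le (cdf_nonneg μ t) (cdf_le_one μ t) (cdf_nonneg ν t)
      (cdf_le_one ν t)

variable {g : ℝ → ℝ} {C : ℝ}

lemma integral_intervalIntegral_eq_intervalIntegral_mul_one_sub_cdf
    (hμ : ∀ᵐ x ∂μ, x ∈ Icc a b) (hg : Measurable g) (hgC : ∀ t, |g t| ≤ C) :
    ∫ x, (∫ t in a..x, g t) ∂μ = ∫ t in a..b, g t * (1 - cdf μ t) := by
  obtain ⟨x₀, hx₀⟩ := hμ.exists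
  set k : ℝ → ℝ → ℝ := fun x t => (Ico a b ∩ Iio x).indicator g t
  have hk_int : Integrable (Function.uncurry k) (μ.prod volume) := by
    have hk : Function.uncurry k =
        {p : ℝ × ℝ | p.2 ∈ Ico a b ∩ Iio p.1}.indicator (fun p => g p.2) := rfl
    have hE : MeasurableSet {p : ℝ × ℝ | p.2 ∈ Ico a b ∩ Iio p.1} :=
      (measurable_snd measurableSet_Ico).inter (measurableSet_lt measurable_snd measurable_fst)
    rw [hk, integrable_indicator_iff hE]
    refine IntegrableOn.mono_set (t := univ ×ˢ Ico a b) ?_ fun p hp => ⟨trivial, hp.1⟩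
    refine IntegrableOn.of_bound ?_ (hg.comp measurable_snd).aestronglyMeasurable C
      (ae_of_all _ fun p => hgC p.2)
    rw [Measure.prod_prod]
    exact ENNReal.mul_lt_top (measure_lt_top _ _) measure_Ico_lt_top
  have hx_slice : ∀ x ∈ Icc a b, ∫ t in a..x, g t = ∫ t, k x t := fun x hx => by
    rw [intervalIntegral.integral_of_le hx.1, integral_Ioc_eq_integral_Ioo,
      ← integral_Ico_eq_integral_Ioo, ← integral_indicator measurableSet_Ico]
    simp only [k, Ico_inter_Iio, min_eq_right hx.2]
  have ht_slice : ∀ t, ∫ x, k x t ∂μ = (Ico a b).indicator (fun t => g t * (1 - cdf μ t)) t := by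
    intro t
    have hk : (fun x => k x t) = fun x => (Ico a b).indicator g t * (Ioi t).indicator 1 x := by
      ext x
      by_cases ht : t ∈ Ico a b <;> by_cases hx : t < x <;>
        simp [k, indicator_apply, ht, hx, -mem_Ico, -Ico_inter_Iio]
    rw [hk, integral_const_mul, integral_indicator_one measurableSet_Ioi, ← compl_Iic,
      probReal_compl_eq_one_sub measurableSet_Iic, ← cdf_eq_real, indicator_mul_left]
  calc ∫ x, (∫ t in a..x, g t) ∂μ = ∫ x, (∫ t, k x t) ∂μ := integral_congr_ae (hμ.mono hx_slice)
    _ = ∫ t, ∫ x, k x t ∂μ := integral_integral_swap hk_int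
    _ = ∫ t in a..b, g t * (1 - cdf μ t) := by
      simp_rw [ht_slice]
      rw [integral_indicator measurableSet_Ico, integral_Ico_eq_integral_Ioo,
        ← integral_Ioc_eq_integral_Ioo, intervalIntegral.integral_of_le (hx₀.1.trans hx₀.2)]

lemma integral_intervalIntegral_sub_integral_intervalIntegral
    (hμ : ∀ᵐ x ∂μ, x ∈ Icc a b) (hν : ∀ᵐ x ∂ν, x ∈ Icc a b) (hg : Measurable g)
    (hgC : ∀ t, |g t| ≤ C) :
    ∫ x, (∫ t in a..x, g t) ∂μ - ∫ x, (∫ t in a..x, g t) ∂ν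
      = ∫ t, g t * (cdf ν t - cdf μ t) := by
  obtain ⟨x₀, hx₀⟩ := hμ.exists
  have hint : ∀ m : Measure ℝ, IntervalIntegrable (fun t => g t * (1 - cdf m t)) volume a b := by
    intro m
    refine intervalIntegrable_of_abs_le (g := fun t => g t * (1 - cdf m t)) (C := C)
      (hg.mul (measurable_const.sub (monotone_cdf m).measurable)) (fun t => ?_) a b
    rw [abs_mul]
    refine (mul_le_of_le_one_right (abs_nonneg _) ?_).trans (hgC t)
    exact abs_sub_le_of_nonneg_of_le zero_le_one le_rfl (cdf_nonneg m t) (cdf_le_one m t)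
  rw [integral_intervalIntegral_eq_intervalIntegral_mul_one_sub_cdf hμ hg hgC,
    integral_intervalIntegral_eq_intervalIntegral_mul_one_sub_cdf hν hg hgC,
    ← intervalIntegral.integral_sub (hint μ) (hint ν),
    intervalIntegral.integral_of_le (hx₀.1.trans hx₀.2), ← integral_Icc_eq_integral_Ioc]
  calc ∫ t in Icc a b, (g t * (1 - cdf μ t) - g t * (1 - cdf ν t))
      = ∫ t in Icc a b, g t * (cdf ν t - cdf μ t) :=
        setIntegral_congr_fun measurableSet_Icc fun t _ => by ring
    _ = ∫ t, g t * (cdf ν t - cdf μ t) :=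
        setIntegral_eq_integral_of_forall_compl_eq_zero fun t ht => by
          rw [cdf_eq_cdf_of_notMem_Icc hν hμ ht, sub_self, mul_zero]

lemma integral_sub_integral_le_integral_abs_cdf_sub_cdf
    (hμ : ∀ᵐ x ∂μ, x ∈ Icc a b) (hν : ∀ᵐ x ∂ν, x ∈ Icc a b) {F : ℝ → ℝ}
    (hF : LipschitzWith 1 F) :
    ∫ x, F x ∂μ - ∫ x, F x ∂ν ≤ ∫ t, |cdf μ t - cdf ν t| := by
  have hF' : ∀ t, |deriv F t| ≤ (1 : ℝ≥0) := fun t => norm_deriv_le_of_lipschitz hF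
  set φ : ℝ → ℝ := fun x => ∫ t in a..x, deriv F t
  -- Lipschitz functions are absolutely continuous, hence primitives of their a.e. derivative.
  have hFTC : ∀ x ∈ Icc a b, F x = F a + φ x := fun x _ => by
    show F x = F a + ∫ t in a..x, deriv F t
    rw [(hF.lipschitzOnWith.absolutelyContinuousOnInterval).integral_deriv_eq_sub]
    ring
  have hrepr : ∀ (m : Measure ℝ) [IsProbabilityMeasure m], (∀ᵐ x ∂m, x ∈ Icc a b) →
      ∫ x, F x ∂m = F a + ∫ x, φ x ∂m := fun m _ hm => by
    rw [integral_congr_ae (hm.mono hFTC), integral_add (integrable_const _)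
      ((lipschitzWith_intervalIntegral (measurable_deriv F) hF' a).continuous.continuousOn
        |>.integrable_of_ae_mem_Icc hm),
      integral_const, probReal_univ, one_smul]
  calc ∫ x, F x ∂μ - ∫ x, F x ∂ν = ∫ x, φ x ∂μ - ∫ x, φ x ∂ν := by
        rw [hrepr μ hμ, hrepr ν hν]; ring
    _ = ∫ t, deriv F t * (cdf ν t - cdf μ t) :=
        integral_intervalIntegral_sub_integral_intervalIntegral hμ hν (measurable_deriv F) hF'
    _ ≤ ‖∫ t, deriv F t * (cdf ν t - cdf μ t)‖ := Real.le_norm_self _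
    _ ≤ ∫ t, |cdf μ t - cdf ν t| := by
        refine norm_integral_le_of_norm_le (integrable_abs_cdf_sub_cdf hμ hν)
          (ae_of_all _ fun t => ?_)
        rw [Real.norm_eq_abs, abs_mul, abs_sub_comm]
        exact mul_le_of_le_one_left (abs_nonneg _) (hF' t)

lemma exists_lipschitzWith_integral_sub_integral_eq_integral_abs_cdf_sub_cdf
    (hμ : ∀ᵐ x ∂μ, x ∈ Icc a b) (hν : ∀ᵐ x ∂ν, x ∈ Icc a b) :
    ∃ F : ℝ → ℝ, LipschitzWith 1 F ∧
      ∫ x, F x ∂μ - ∫ x, F x ∂ν = ∫ t, |cdf μ t - cdf ν t| := by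
  set g : ℝ → ℝ := fun t => if cdf μ t ≤ cdf ν t then 1 else -1
  have hg : Measurable g :=
    Measurable.ite (measurableSet_le (monotone_cdf μ).measurable (monotone_cdf ν).measurable)
      measurable_const measurable_const
  have hg1 : ∀ t, |g t| ≤ (1 : ℝ≥0) := fun t => by simp only [g]; split_ifs <;> simp
  refine ⟨fun x => ∫ t in a..x, g t, lipschitzWith_intervalIntegral hg hg1 a, ?_⟩
  rw [integral_intervalIntegral_sub_integral_intervalIntegral hμ hν hg hg1]
  refine integral_congr_ae (ae_of_all _ fun t => ?_)
  simp only [g]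
  split_ifs with h
  · rw [abs_sub_comm, abs_of_nonneg (sub_nonneg.2 h), one_mul]
  · rw [abs_of_pos (sub_pos.2 (not_le.1 h))]; ring

end ConcentratedOnIcc

/-- For Borel probability measures `μ`, `ν` on a compact set `S ⊆ ℝ`, regarded as
probability measures on `ℝ`, the Monge–Kantorovich distance equals the `L¹` distance
between the cumulative distribution functions `F_μ(x) = μ((-∞, x])`, `F_ν(x) = ν((-∞, x])`. -/
theorem dMK_eq_integral_abs_cdf_sub (S : Set ℝ) (hS : IsCompact S)
    (μ ν : Measure S) [IsProbabilityMeasure μ] [IsProbabilityMeasure ν] :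
    dMK μ ν =
      ∫ x : ℝ, |((μ.map (Subtype.val : S → ℝ)) (Set.Iic x)).toReal -
        ((ν.map (Subtype.val : S → ℝ)) (Set.Iic x)).toReal| := by
  have hval : MeasurableEmbedding (Subtype.val : S → ℝ) :=
    MeasurableEmbedding.subtype_coe hS.isClosed.measurableSet
  have := Measure.isProbabilityMeasure_map (μ := μ) hval.measurable.aemeasurable
  have := Measure.isProbabilityMeasure_map (μ := ν) hval.measurable.aemeasurable
  obtain ⟨a, ha⟩ := hS.bddBelow
  obtain ⟨b, hb⟩ := hS.bddAbove
  have hIcc : ∀ m : Measure S, ∀ᵐ x ∂m.map Subtype.val, x ∈ Icc a b := fun m =>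
    (ae_map_iff hval.measurable.aemeasurable measurableSet_Icc).2
      (ae_of_all _ fun s => ⟨ha s.2, hb s.2⟩)
  simp_rw [← measureReal_def, ← cdf_eq_real]
  refine IsGreatest.csSup_eq ⟨?_, ?_⟩
  · obtain ⟨F, hF, hFeq⟩ :=
      exists_lipschitzWith_integral_sub_integral_eq_integral_abs_cdf_sub_cdf (hIcc μ) (hIcc ν)
    refine ⟨F ∘ Subtype.val, by simpa using hF.comp (LipschitzWith.subtype_val S), ?_⟩
    rw [← hFeq, hval.integral_map, hval.integral_map]; rfl
  · rintro r ⟨f, hf, rfl⟩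
    obtain ⟨F, hF, rfl⟩ := hf.exists_lipschitzWith_comp_val_eq
    simp only [Function.comp_apply]
    rw [← hval.integral_map, ← hval.integral_map]
    exact integral_sub_integral_le_integral_abs_cdf_sub_cdf (hIcc μ) (hIcc ν) hF
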